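/- arXiv:2604.01070 — 2 statements merged into one kernel-verified Lean document; each statement's English description precedes it below -/
import Mathlib

section
/- Let B ⊆ (ℝ^q)^ℤ be an affine behavior, Φ a symmetric positive semidefinite matrix of size qL, and w̄ ∈ B a fixed trajectory. If for all w₁, w₂ ∈ B and all t, ∇Q_Φ(w₁ − w₂)(t) ≤ 0, then there exists for each t a symmetric matrix Ψ(t) of size q(L+1)+1, whose top-left q(L+1) × q(L+1) block equals ∇Φ, such that (w_{[t,t+L]}, 1)ᵀ Ψ(t) (w_{[t,t+L]}, 1) = ∇Q_Φ(w − w̄)(t) ≤ 0 for all w ∈ B. Explicitly, Ψ(t) has off-diagonal block −∇Φ·w̄_{[t,t+L+1]} and scalar block w̄_{[t,t+L+1]}ᵀ ∇Φ w̄_{[t,t+L+1]}. -/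
open Matrix

/-- The stacked vector `w_{[t, t+L-1]}` of a trajectory, indexed by `Fin L × Fin q`. -/
def stack (q L : ℕ) (w : ℤ → Fin q → ℝ) (t : ℤ) : Fin L × Fin q → ℝ :=
  fun p => w (t + (p.1.val : ℤ)) p.2

/-- The quadratic difference form `Q_Φ(w)(t)`. -/
def qdf (q L : ℕ) (Φ : Matrix (Fin L × Fin q) (Fin L × Fin q) ℝ)
    (w : ℤ → Fin q → ℝ) (t : ℤ) : ℝ :=
  stack q L w t ⬝ᵥ Φ.mulVec (stack q L w t)

/-- The increment `∇Q_Φ(w)(t) = Q_Φ(w)(t+1) - Q_Φ(w)(t)`. -/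
def incr (q L : ℕ) (Φ : Matrix (Fin L × Fin q) (Fin L × Fin q) ℝ)
    (w : ℤ → Fin q → ℝ) (t : ℤ) : ℝ :=
  qdf q L Φ w (t + 1) - qdf q L Φ w t

/-- The matrix `∇Φ` of size `q(L+1)` inducing the increment of `Q_Φ`. -/
def nablaPhi (q L : ℕ) (Φ : Matrix (Fin L × Fin q) (Fin L × Fin q) ℝ) :
    Matrix (Fin (L + 1) × Fin q) (Fin (L + 1) × Fin q) ℝ :=
  fun p p' =>
    (if h : 1 ≤ p.1.val ∧ 1 ≤ p'.1.val then
        Φ (⟨p.1.val - 1, by have := p.1.isLt; omega⟩, p.2)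
          (⟨p'.1.val - 1, by have := p'.1.isLt; omega⟩, p'.2)
      else 0)
    - (if h : p.1.val < L ∧ p'.1.val < L then
        Φ (⟨p.1.val, h.1⟩, p.2) (⟨p'.1.val, h.2⟩, p'.2)
      else 0)

/-! Shifting the window by one step shows that `∇Φ` is `Φ` padded with a zero block in front
minus `Φ` padded with a zero block at the back, so `∇Q_Φ(w)(t)` is the quadratic form of the
symmetric matrix `∇Φ` at `w_{[t,t+L]}`. The matrix `Ψ(t)` homogenizes the affine quadratic
`v ↦ (v - w̄_{[t,t+L]})ᵀ ∇Φ (v - w̄_{[t,t+L]})`, and its sign on `B` is the dissipation hypothesis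
applied to the pair `w, w̄`. -/

namespace Matrix

section Homogenization

variable {n R : Type*} [Fintype n] [CommRing R]

def homogenizeAt (M : Matrix n n R) (c : n → R) : Matrix (n ⊕ Unit) (n ⊕ Unit) R :=
  fromBlocks M (replicateCol Unit (-(M *ᵥ c))) (replicateRow Unit (-(M *ᵥ c)))
    (of fun _ _ => c ⬝ᵥ M *ᵥ c)

theorem IsSymm.homogenizeAt {M : Matrix n n R} (hM : M.IsSymm) (c : n → R) :
    (M.homogenizeAt c).IsSymm :=
  hM.fromBlocks (transpose_replicateCol _) (IsSymm.ext fun _ _ => rfl)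

theorem homogenizeAt_mulVec_sumElim_one (M : Matrix n n R) (c v : n → R) :
    M.homogenizeAt c *ᵥ Sum.elim v (fun _ => 1) =
      Sum.elim (M *ᵥ (v - c)) (fun _ => -(M *ᵥ c ⬝ᵥ v) + c ⬝ᵥ M *ᵥ c) := by
  ext (i | _) <;>
    simp [homogenizeAt, replicateCol, replicateRow, mulVec, dotProduct, sub_eq_add_neg, mul_add, Finset.sum_add_distrib]

theorem IsSymm.dotProduct_homogenizeAt_mulVec {M : Matrix n n R} (hM : M.IsSymm) (c v : n → R) :
    Sum.elim v (fun _ => 1) ⬝ᵥ M.homogenizeAt c *ᵥ Sum.elim v (fun _ => 1) =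
      (v - c) ⬝ᵥ M *ᵥ (v - c) := by
  have hswap : c ⬝ᵥ M *ᵥ v = M *ᵥ c ⬝ᵥ v := by
    rw [dotProduct_mulVec, ← mulVec_transpose, hM.eq]
  rw [homogenizeAt_mulVec_sumElim_one, sumElim_dotProduct_sumElim, sub_dotProduct,
    mulVec_sub, dotProduct_sub, dotProduct_sub, hswap]
  simp only [dotProduct, Finset.univ_unique, Finset.sum_singleton, one_mul]
  ring

end Homogenization

section Padding

variable {m R : Type*} {L : ℕ}

def padFirst [Zero R] (Φ : Matrix (Fin L × m) (Fin L × m) R) :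
    Matrix (Fin (L + 1) × m) (Fin (L + 1) × m) R :=
  fun p p' =>
    if h : 1 ≤ p.1.val ∧ 1 ≤ p'.1.val then
      Φ (⟨p.1.val - 1, by have := p.1.isLt; omega⟩, p.2)
        (⟨p'.1.val - 1, by have := p'.1.isLt; omega⟩, p'.2)
    else 0

def padLast [Zero R] (Φ : Matrix (Fin L × m) (Fin L × m) R) :
    Matrix (Fin (L + 1) × m) (Fin (L + 1) × m) R :=
  fun p p' =>
    if h : p.1.val < L ∧ p'.1.val < L then Φ (⟨p.1.val, h.1⟩, p.2) (⟨p'.1.val, h.2⟩, p'.2)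
    else 0

theorem IsSymm.padFirst [Zero R] {Φ : Matrix (Fin L × m) (Fin L × m) R} (hΦ : Φ.IsSymm) :
    Φ.padFirst.IsSymm := by
  refine IsSymm.ext fun p p' => ?_
  simp only [Matrix.padFirst, and_comm]
  split_ifs
  exacts [hΦ.apply _ _, rfl]

theorem IsSymm.padLast [Zero R] {Φ : Matrix (Fin L × m) (Fin L × m) R} (hΦ : Φ.IsSymm) :
    Φ.padLast.IsSymm := by
  refine IsSymm.ext fun p p' => ?_
  simp only [Matrix.padLast, and_comm]
  split_ifs
  exacts [hΦ.apply _ _, rfl]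

theorem dotProduct_padFirst_mulVec [Fintype m] [Semiring R] (Φ : Matrix (Fin L × m) (Fin L × m) R)
    (u v : Fin (L + 1) × m → R) :
    u ⬝ᵥ Φ.padFirst *ᵥ v =
      (fun p => u (p.1.succ, p.2)) ⬝ᵥ Φ *ᵥ fun p => v (p.1.succ, p.2) := by
  simp only [dotProduct, mulVec, Fintype.sum_prod_type, Fin.sum_univ_succ, Finset.mul_sum]
  simp [Matrix.padFirst, Finset.mul_sum]

theorem dotProduct_padLast_mulVec [Fintype m] [Semiring R] (Φ : Matrix (Fin L × m) (Fin L × m) R)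
    (u v : Fin (L + 1) × m → R) :
    u ⬝ᵥ Φ.padLast *ᵥ v =
      (fun p => u (p.1.castSucc, p.2)) ⬝ᵥ Φ *ᵥ fun p => v (p.1.castSucc, p.2) := by
  simp only [dotProduct, mulVec, Fintype.sum_prod_type, Fin.sum_univ_castSucc, Finset.mul_sum]
  simp [Matrix.padLast, Finset.mul_sum]

end Padding

end Matrix

theorem nablaPhi_eq_padFirst_sub_padLast (q L : ℕ) (Φ : Matrix (Fin L × Fin q) (Fin L × Fin q) ℝ) :
    nablaPhi q L Φ = Φ.padFirst - Φ.padLast :=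
  rfl

theorem isSymm_nablaPhi {q L : ℕ} {Φ : Matrix (Fin L × Fin q) (Fin L × Fin q) ℝ}
    (hΦ : Φ.IsSymm) : (nablaPhi q L Φ).IsSymm := by
  rw [nablaPhi_eq_padFirst_sub_padLast]
  exact hΦ.padFirst.sub hΦ.padLast

theorem stack_sub (q L : ℕ) (w w' : ℤ → Fin q → ℝ) (t : ℤ) :
    stack q L (w - w') t = stack q L w t - stack q L w' t :=
  rfl

theorem stack_succ_shift (q L : ℕ) (w : ℤ → Fin q → ℝ) (t : ℤ) :
    (fun p : Fin L × Fin q => stack q (L + 1) w t (p.1.succ, p.2)) = stack q L w (t + 1) := by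
  ext p
  simp only [stack, Fin.val_succ]
  congr 1
  push_cast
  ring

theorem stack_castSucc_shift (q L : ℕ) (w : ℤ → Fin q → ℝ) (t : ℤ) :
    (fun p : Fin L × Fin q => stack q (L + 1) w t (p.1.castSucc, p.2)) = stack q L w t :=
  rfl

theorem incr_eq_dotProduct_nablaPhi_mulVec (q L : ℕ)
    (Φ : Matrix (Fin L × Fin q) (Fin L × Fin q) ℝ) (w : ℤ → Fin q → ℝ) (t : ℤ) :
    incr q L Φ w t = stack q (L + 1) w t ⬝ᵥ nablaPhi q L Φ *ᵥ stack q (L + 1) w t := by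
  rw [nablaPhi_eq_padFirst_sub_padLast, sub_mulVec, dotProduct_sub,
    dotProduct_padFirst_mulVec, dotProduct_padLast_mulVec, stack_succ_shift, stack_castSucc_shift]
  rfl

theorem stmt9_general (q L : ℕ) (B : Set (ℤ → Fin q → ℝ))
    (Φ : Matrix (Fin L × Fin q) (Fin L × Fin q) ℝ)
    (hsym : Φ.IsSymm)
    (wbar : ℤ → Fin q → ℝ) (hwbar : wbar ∈ B)
    (hdec : ∀ w₁ ∈ B, ∀ w₂ ∈ B, ∀ t : ℤ, incr q L Φ (w₁ - w₂) t ≤ 0) :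
    ∀ t : ℤ,
      ∃ Ψ : Matrix ((Fin (L + 1) × Fin q) ⊕ Unit) ((Fin (L + 1) × Fin q) ⊕ Unit) ℝ,
        Ψ.IsSymm ∧
        (∀ p p' : Fin (L + 1) × Fin q, Ψ (Sum.inl p) (Sum.inl p') = nablaPhi q L Φ p p') ∧
        (∀ p : Fin (L + 1) × Fin q,
          Ψ (Sum.inl p) (Sum.inr ()) =
            -((nablaPhi q L Φ).mulVec (stack q (L + 1) wbar t) p)) ∧
        Ψ (Sum.inr ()) (Sum.inr ()) =
          stack q (L + 1) wbar t ⬝ᵥ (nablaPhi q L Φ).mulVec (stack q (L + 1) wbar t) ∧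
        ∀ w ∈ B,
          (Sum.elim (stack q (L + 1) w t) (fun _ => (1 : ℝ)) ⬝ᵥ
              Ψ.mulVec (Sum.elim (stack q (L + 1) w t) (fun _ => (1 : ℝ))))
            = incr q L Φ (w - wbar) t ∧
          incr q L Φ (w - wbar) t ≤ 0 := by
  intro t
  have hnabla := isSymm_nablaPhi hsym
  refine ⟨(nablaPhi q L Φ).homogenizeAt (stack q (L + 1) wbar t), hnabla.homogenizeAt _,
    fun _ _ => rfl, fun _ => rfl, rfl, fun w hw => ⟨?_, hdec w hw wbar hwbar t⟩⟩
  rw [hnabla.dotProduct_homogenizeAt_mulVec, incr_eq_dotProduct_nablaPhi_mulVec, stack_sub]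

theorem stmt9 (q L : ℕ) (B : Set (ℤ → Fin q → ℝ))
    (haff : ∀ w₁ ∈ B, ∀ w₂ ∈ B, ∀ α : ℝ, α • w₁ + (1 - α) • w₂ ∈ B)
    (Φ : Matrix (Fin L × Fin q) (Fin L × Fin q) ℝ)
    (hsym : Φ.IsSymm) (hpsd : Φ.PosSemidef)
    (wbar : ℤ → Fin q → ℝ) (hwbar : wbar ∈ B)
    (hdec : ∀ w₁ ∈ B, ∀ w₂ ∈ B, ∀ t : ℤ, incr q L Φ (w₁ - w₂) t ≤ 0) :
    ∀ t : ℤ,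
      ∃ Ψ : Matrix ((Fin (L + 1) × Fin q) ⊕ Unit) ((Fin (L + 1) × Fin q) ⊕ Unit) ℝ,
        Ψ.IsSymm ∧
        (∀ p p' : Fin (L + 1) × Fin q, Ψ (Sum.inl p) (Sum.inl p') = nablaPhi q L Φ p p') ∧
        (∀ p : Fin (L + 1) × Fin q,
          Ψ (Sum.inl p) (Sum.inr ()) =
            -((nablaPhi q L Φ).mulVec (stack q (L + 1) wbar t) p)) ∧
        Ψ (Sum.inr ()) (Sum.inr ()) =
          stack q (L + 1) wbar t ⬝ᵥ (nablaPhi q L Φ).mulVec (stack q (L + 1) wbar t) ∧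
        ∀ w ∈ B,
          (Sum.elim (stack q (L + 1) w t) (fun _ => (1 : ℝ)) ⬝ᵥ
              Ψ.mulVec (Sum.elim (stack q (L + 1) w t) (fun _ => (1 : ℝ))))
            = incr q L Φ (w - wbar) t ∧
          incr q L Φ (w - wbar) t ≤ 0 :=
  stmt9_general q L B Φ hsym wbar hwbar hdec
end

section
/- Let B ⊆ (ℝ^q × ℝ^k)^ℤ be affine and C ⊆ (ℝ^k)^ℤ be affine, with B ⋈ C := {(w,c) ∈ B : c ∈ C} nonempty. Then dif(π_w(B ⋈ C)) = π_w(dif(B) ⋈ dif(C)), i.e., the difference behavior of the closed-loop interconnection equals the interconnection of the difference behaviors, projected onto the to-be-controlled variables. -/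
lemma aff_sub_add {M : Type*} [AddCommGroup M] [Module ℝ M] (S : Set M)
    (haff : ∀ p₁ ∈ S, ∀ p₂ ∈ S, ∀ α : ℝ, α • p₁ + (1 - α) • p₂ ∈ S)
    {x y z : M} (hx : x ∈ S) (hy : y ∈ S) (hz : z ∈ S) : x - y + z ∈ S := by
  have hm : (1/2 : ℝ) • x + (1 - 1/2 : ℝ) • z ∈ S := haff x hx z hz (1/2)
  have h := haff _ hm y hy 2
  have : (2:ℝ) • ((1/2 : ℝ) • x + (1 - 1/2 : ℝ) • z) + (1 - 2 : ℝ) • y = x - y + z := by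
    module
  rwa [this] at h

theorem stmt17 (q k : ℕ)
    (B : Set ((ℤ → Fin q → ℝ) × (ℤ → Fin k → ℝ)))
    (haffB : ∀ p₁ ∈ B, ∀ p₂ ∈ B, ∀ α : ℝ, α • p₁ + (1 - α) • p₂ ∈ B)
    (C : Set (ℤ → Fin k → ℝ))
    (haffC : ∀ c₁ ∈ C, ∀ c₂ ∈ C, ∀ α : ℝ, α • c₁ + (1 - α) • c₂ ∈ C)
    (hne : {p | p ∈ B ∧ p.2 ∈ C}.Nonempty) :
    {v | ∃ a ∈ Prod.fst '' {p | p ∈ B ∧ p.2 ∈ C},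
          ∃ b ∈ Prod.fst '' {p | p ∈ B ∧ p.2 ∈ C}, v = a - b} =
      Prod.fst '' {p | (∃ p₁ ∈ B, ∃ p₂ ∈ B, p = p₁ - p₂) ∧
        (∃ c₁ ∈ C, ∃ c₂ ∈ C, p.2 = c₁ - c₂)} := by
  ext v
  constructor
  · rintro ⟨a, ⟨pa, ⟨hpaB, hpaC⟩, rfl⟩, b, ⟨pb, ⟨hpbB, hpbC⟩, rfl⟩, rfl⟩
    exact ⟨pa - pb, ⟨⟨pa, hpaB, pb, hpbB, rfl⟩, ⟨pa.2, hpaC, pb.2, hpbC, rfl⟩⟩, rfl⟩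
  · rintro ⟨p, ⟨⟨p₁, hp₁, p₂, hp₂, rfl⟩, c₁, hc₁, c₂, hc₂, hc⟩, rfl⟩
    obtain ⟨x₀, hx₀B, hx₀C⟩ := hne
    have haB : p₁ - p₂ + x₀ ∈ B := aff_sub_add B haffB hp₁ hp₂ hx₀B
    have haC : (p₁ - p₂ + x₀).2 ∈ C := by
      simp only [Prod.snd_add, Prod.snd_sub]
      have : p₁.2 - p₂.2 = c₁ - c₂ := hc
      rw [this]
      exact aff_sub_add C haffC hc₁ hc₂ hx₀C
    refine ⟨(p₁ - p₂ + x₀).1, ⟨_, ⟨haB, haC⟩, rfl⟩, x₀.1, ⟨x₀, ⟨hx₀B, hx₀C⟩, rfl⟩, ?_⟩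
    simp [Prod.fst_sub]
end
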